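/- arXiv:2007.03057 — 8 statements merged into one kernel-verified Lean document; each statement's English description precedes it below -/
import Mathlib

section
/- Let w be a nonnegative symmetric function on pairs of points satisfying the triangle inequality, and for requests i,j with pick-up locations s_i,s_j and drop-off locations t_i,t_j define u_{ij} = min{w(s_i,s_j)+w(s_j,t_i)+w(t_i,t_j), w(s_i,s_j)+w(s_j,t_j)+w(t_j,t_i), w(s_i,t_i)+w(t_i,s_j)+w(s_j,t_j)}. Then u_{ji} ≤ 2·u_{ij}. -/
/-! Each route defining `u si ti sj tj` turns into one of the routes defining `u sj tj si ti` at
most twice as long: a route beginning `si → sj` is replaced by the route beginning `sj → si`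
that then visits the same stops, and the route `si → ti → sj → tj` is rotated to
`sj → tj → si → ti`, whose new leg `tj → si` is no longer than the whole original route. -/

noncomputable def u {α : Type*} [PseudoMetricSpace α] (si ti sj tj : α) : ℝ :=
  min (min (dist si sj + dist sj ti + dist ti tj) (dist si sj + dist sj tj + dist tj ti))
    (dist si ti + dist ti sj + dist sj tj)

section RouteLength

variable {α : Type*} [PseudoMetricSpace α] (a b c d : α)

theorem path_swap_first_two_le_two_mul :
    dist b a + dist a c + dist c d ≤ 2 * (dist a b + dist b c + dist c d) := by
  have := dist_triangle a b c
  rw [dist_comm b a]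
  linarith [dist_nonneg (x := b) (y := c), dist_nonneg (x := c) (y := d)]

theorem path_rotate_le_two_mul :
    dist c d + dist d a + dist a b ≤ 2 * (dist a b + dist b c + dist c d) := by
  have := dist_triangle4 a b c d
  rw [dist_comm d a]
  linarith [dist_nonneg (x := b) (y := c)]

end RouteLength

theorem u_swap_le_two_mul {α : Type*} [PseudoMetricSpace α] (si ti sj tj : α) :
    u sj tj si ti ≤ 2 * u si ti sj tj := by
  rw [u, u, mul_min_of_nonneg _ _ zero_le_two, mul_min_of_nonneg _ _ zero_le_two]
  refine le_min (le_min ?_ ?_) ?_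
  · exact (min_le_left _ _).trans <| (min_le_right _ _).trans <|
      path_swap_first_two_le_two_mul si sj ti tj
  · exact (min_le_left _ _).trans <| (min_le_left _ _).trans <|
      path_swap_first_two_le_two_mul si sj tj ti
  · exact (min_le_right _ _).trans <| path_rotate_le_two_mul si ti sj tj
end

section
/- Let w be a pseudometric and for points d_k, s_i, t_i, s_j, t_j define u_{ij} = min{w(s_i,s_j)+w(s_j,t_i)+w(t_i,t_j), w(s_i,s_j)+w(s_j,t_j)+w(t_j,t_i), w(s_i,t_i)+w(t_i,s_j)+w(s_j,t_j)}. Then w(d_k,s_i)+w(s_i,t_i)+w(t_i,d_k)+w(d_k,s_j)+w(s_j,t_j) ≤ 3·(w(d_k,s_i)+u_{ij}). -/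
section

variable {α : Type*} [PseudoMetricSpace α]

theorem dist_le_u (si ti sj tj : α) : dist si ti ≤ u si ti sj tj := by
  refine le_min (le_min ?_ ?_) ?_
  · linarith [dist_triangle si sj ti, dist_nonneg (x := ti) (y := tj)]
  · exact dist_triangle4 si sj tj ti
  · linarith [dist_nonneg (x := ti) (y := sj), dist_nonneg (x := sj) (y := tj)]

theorem dist_add_dist_le_u (si ti sj tj : α) :
    dist si sj + dist sj tj ≤ u si ti sj tj := by
  refine le_min (le_min ?_ ?_) ?_
  · linarith [dist_triangle sj ti tj]
  · linarith [dist_nonneg (x := tj) (y := ti)]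
  · linarith [dist_triangle si ti sj]

end

theorem path_le_three_cost {α : Type*} [PseudoMetricSpace α] (dk si ti sj tj : α) :
    dist dk si + dist si ti + dist ti dk + dist dk sj + dist sj tj
      ≤ 3 * (dist dk si + u si ti sj tj) := by
  have return_via_si : dist ti dk ≤ dist si ti + dist dk si := by
    simpa only [dist_comm] using dist_triangle ti si dk
  have detour_via_si := dist_triangle dk si sj
  linarith [dist_le_u si ti sj tj, dist_add_dist_le_u si ti sj tj]
end

section
/- Let w be a pseudometric on points s_i,t_i,s_j,t_j, and define μ_{ij} = min{w(s_i,s_j)+w(s_j,t_i)+(w(s_i,s_j)+w(s_j,t_i)+w(t_i,t_j)), w(s_i,s_j)+w(s_j,t_j)+(w(s_i,s_j)+w(s_j,t_j)+w(t_j,t_i)), w(s_i,t_i)+(w(s_i,t_i)+w(t_i,s_j)+w(s_j,t_j))}, and u_{ij} = min{w(s_i,s_j)+w(s_j,t_i)+w(t_i,t_j), w(s_i,s_j)+w(s_j,t_j)+w(t_j,t_i), w(s_i,t_i)+w(t_i,s_j)+w(s_j,t_j)}. Then (μ_{ij}+μ_{ji})/2 + w(s_i,s_j) ≤ 3·min{u_{ij},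 u_{ji}}. -/
noncomputable def mu {α : Type*} [PseudoMetricSpace α] (si ti sj tj : α) : ℝ :=
  min (min (dist si sj + dist sj ti + (dist si sj + dist sj ti + dist ti tj))
      (dist si sj + dist sj tj + (dist si sj + dist sj tj + dist tj ti)))
    (dist si ti + (dist si ti + dist ti sj + dist sj tj))

theorem mu_add_mu_swap_add_two_mul_dist_le_six_mul_u {α : Type*} [PseudoMetricSpace α]
    (si ti sj tj : α) :
    mu si ti sj tj + mu sj tj si ti + 2 * dist si sj ≤ 6 * u si ti sj tj := by
  have h_swap : mu sj tj si ti ≤ dist sj tj + (dist sj tj + dist tj si + dist si ti) :=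
    min_le_right _ _
  have h_route₁ :
      mu si ti sj tj ≤ dist si sj + dist sj ti + (dist si sj + dist sj ti + dist ti tj) :=
    (min_le_left _ _).trans (min_le_left _ _)
  have h_route₂ :
      mu si ti sj tj ≤ dist si sj + dist sj tj + (dist si sj + dist sj tj + dist tj ti) :=
    (min_le_left _ _).trans (min_le_right _ _)
  have h_route₃ :
      mu si ti sj tj ≤ dist si ti + (dist si ti + dist ti sj + dist sj tj) :=
    min_le_right _ _
  have hsi := dist_comm si sj
  have hti := dist_comm ti sj
  have htj := dist_comm tj ti
  rw [u, mul_min_of_nonneg _ _ (by norm_num), mul_min_of_nonneg _ _ (by norm_num)]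
  refine le_min (le_min ?_ ?_) ?_
  · linarith [dist_triangle sj ti tj, dist_triangle4 tj ti sj si, dist_triangle si sj ti,
      dist_nonneg (x := ti) (y := tj)]
  · linarith [dist_triangle tj sj si, dist_triangle4 si sj tj ti, dist_comm tj sj,
      dist_nonneg (x := tj) (y := ti)]
  · linarith [dist_triangle4 tj sj ti si, dist_triangle si ti sj, dist_comm tj sj, dist_comm ti si,
      dist_nonneg (x := ti) (y := sj), dist_nonneg (x := sj) (y := tj)]

theorem mu_avg_add_dist_le_three_min_u {α : Type*} [PseudoMetricSpace α]
    (si ti sj tj : α) :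
    (mu si ti sj tj + mu sj tj si ti) / 2 + dist si sj
      ≤ 3 * min (u si ti sj tj) (u sj tj si ti) := by
  have hij := mu_add_mu_swap_add_two_mul_dist_le_six_mul_u si ti sj tj
  have hji := mu_add_mu_swap_add_two_mul_dist_le_six_mul_u sj tj si ti
  rw [dist_comm sj si] at hji
  rw [mul_min_of_nonneg _ _ (by norm_num)]
  exact le_min (by linarith) (by linarith)
end

section
/- Let w be a pseudometric and d,s_i,s_j points. Then min{w(d,s_i)+w(s_i,s_j), w(d,s_j)+w(s_j,s_i)} ≤ (3/2)·(min{w(d,s_i), w(d,s_j)} + w(s_i,s_j)), i.e., w(s_i,s_j) + (w(d,s_i)+w(d,s_j))/2 ≤ (3/2)·(min{w(d,s_i),w(d,s_j)} + w(s_i,s_j)). -/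
/-! Say `w(d, sᵢ) ≤ w(d, sⱼ)`. The triangle inequality gives `w(d, sⱼ) ≤ w(d, sᵢ) + w(sᵢ, sⱼ)`,
so the average `(w(d, sᵢ) + w(d, sⱼ)) / 2` exceeds the minimum `w(d, sᵢ)` by at most
`w(sᵢ, sⱼ) / 2`; as `w(d, sᵢ) ≥ 0`, the extra `w(sᵢ, sⱼ) / 2` is covered by the factor `3 / 2`.
The first inequality follows because a minimum is at most the average. -/

lemma min_le_add_div_two {a b : ℝ} : min a b ≤ (a + b) / 2 := by
  linarith [min_le_left a b, min_le_right a b]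

lemma add_add_div_two_le_three_halves_mul_min_add {a b c : ℝ} (ha : 0 ≤ a) (hb : 0 ≤ b)
    (hab : b ≤ a + c) (hba : a ≤ b + c) :
    c + (a + b) / 2 ≤ 3 / 2 * (min a b + c) := by
  rcases le_total a b with h | h
  · rw [min_eq_left h]; linarith
  · rw [min_eq_right h]; linarith

lemma dist_add_avg_dist_le_three_halves_mul {α : Type*} [PseudoMetricSpace α] (d x y : α) :
    dist x y + (dist d x + dist d y) / 2 ≤ 3 / 2 * (min (dist d x) (dist d y) + dist x y) :=
  add_add_div_two_le_three_halves_mul_min_add dist_nonneg dist_nonneg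
    (dist_triangle d x y) (dist_comm x y ▸ dist_triangle d y x)

theorem ma_three_halves {α : Type*} [PseudoMetricSpace α] (d si sj : α) :
    min (dist d si + dist si sj) (dist d sj + dist sj si)
        ≤ (3 / 2) * (min (dist d si) (dist d sj) + dist si sj) ∧
      dist si sj + (dist d si + dist d sj) / 2
        ≤ (3 / 2) * (min (dist d si) (dist d sj) + dist si sj) := by
  have hAvg := dist_add_avg_dist_le_three_halves_mul d si sj
  refine ⟨?_, hAvg⟩
  calc min (dist d si + dist si sj) (dist d sj + dist sj si)
      = min (dist d si) (dist d sj) + dist si sj := by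
        rw [dist_comm sj si, min_add_add_right]
    _ ≤ (dist d si + dist d sj) / 2 + dist si sj := by gcongr; exact min_le_add_div_two
    _ ≤ 3 / 2 * (min (dist d si) (dist d sj) + dist si sj) := by linarith
end

section
/- Let w be a pseudometric and d,s_i,s_j points. Then 2·(w(s_i,s_j)+2·min{w(d,s_i),w(d,s_j)}) + 4·min{2w(d,s_i)+w(d,s_j), 2w(d,s_j)+w(d,s_i)} ≤ 8·(2·min{w(d,s_i),w(d,s_j)} + w(s_i,s_j)). -/
/-! With `m = min a b` and `M = max a b` for `a = w(d,sᵢ)`, `b = w(d,sⱼ)`, `c = w(sᵢ,sⱼ)`, the second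
minimum is `a + b + m = 2m + M`, so the inequality reads `12m + 4M + 2c ≤ 16m + 8c`, i.e.
`M - m ≤ 3c/2`; and `M - m = |a - b| ≤ c` by the triangle inequality. -/

theorem min_two_mul_add_eq_add_add_min {K : Type*} [Field K] [LinearOrder K]
    [IsStrictOrderedRing K] (a b : K) :
    min (2 * a + b) (2 * b + a) = a + b + min a b := by
  rw [← min_add_add_left]
  congr 1 <;> ring

theorem latency_bound_of_abs_sub_le {K : Type*} [Field K] [LinearOrder K]
    [IsStrictOrderedRing K] {a b c : K} (h : |a - b| ≤ c) :
    2 * (c + 2 * min a b) + 4 * min (2 * a + b) (2 * b + a) ≤ 8 * (2 * min a b + c) := by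
  have hspread : max a b - min a b ≤ c := by rwa [max_sub_min_eq_abs, abs_sub_comm]
  rw [min_two_mul_add_eq_add_add_min]
  linarith [min_add_max a b, abs_nonneg (a - b)]

theorem ca_eight_fifths {α : Type*} [PseudoMetricSpace α] (d si sj : α) :
    2 * (dist si sj + 2 * min (dist d si) (dist d sj)) +
        4 * min (2 * dist d si + dist d sj) (2 * dist d sj + dist d si)
      ≤ 8 * (2 * min (dist d si) (dist d sj) + dist si sj) := by
  apply latency_bound_of_abs_sub_le
  rw [dist_comm d si, dist_comm d sj]
  exact abs_dist_sub_le si sj d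
end

section
/- Let w be a pseudometric and d,s_i,t_i,s_j,t_j points. Then min{2(w(d,s_i)+w(s_i,t_i)) + w(t_i,d)+w(d,s_j)+w(s_j,t_j), 2(w(d,s_j)+w(s_j,t_j)) + w(t_j,d)+w(d,s_i)+w(s_i,t_i)} ≤ 2·max{(w(d,s_i)+w(s_i,t_i)) + (w(d,s_j)+w(s_j,t_j)), w(d,t_i)+w(d,t_j)}. -/
/-! The two routes together cost at most `4 (a + b)`, where `a` and `b` are the lengths of the
paths `d → sᵢ → tᵢ` and `d → sⱼ → tⱼ`, because each return leg `tᵢ → d` is at most `a` (and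
`tⱼ → d` at most `b`) by the triangle inequality. So the cheaper route costs at most `2 (a + b)`,
which is twice the first lower bound. -/

theorem min_le_of_add_le_add_self {α : Type*} [AddCommMonoid α] [LinearOrder α]
    [IsOrderedCancelAddMonoid α] {x y z : α} (h : x + y ≤ z + z) : min x y ≤ z := by
  by_contra! hz
  exact (add_lt_add (hz.trans_le (min_le_left x y)) (hz.trans_le (min_le_right x y))).not_ge h

theorem ta_two_approx_lat {α : Type*} [PseudoMetricSpace α]
    (d si ti sj tj : α) :
    min (2 * (dist d si + dist si ti) + (dist ti d + dist d sj + dist sj tj))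
        (2 * (dist d sj + dist sj tj) + (dist tj d + dist d si + dist si ti))
      ≤ 2 * max ((dist d si + dist si ti) + (dist d sj + dist sj tj))
          (dist d ti + dist d tj) := by
  have hi : dist ti d ≤ dist d si + dist si ti := dist_comm ti d ▸ dist_triangle d si ti
  have hj : dist tj d ≤ dist d sj + dist sj tj := dist_comm tj d ▸ dist_triangle d sj tj
  calc _ ≤ (dist d si + dist si ti + (dist d sj + dist sj tj))
        + (dist d si + dist si ti + (dist d sj + dist sj tj)) :=
        min_le_of_add_le_add_self (by linarith)
    _ = 2 * (dist d si + dist si ti + (dist d sj + dist sj tj)) := (two_mul _).symm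
    _ ≤ _ := by gcongr; exact le_max_left _ _
end

section
/- Let w be a pseudometric and d,s_i,t_i,s_j,t_j points, and let wait = min over the six feasible orderings (each pick-up before its drop-off) of the sum of the path length from d to the first drop-off plus the path length from d to the second drop-off. Then 2·min{w(d,s_i)+w(s_i,t_i)+w(t_i,d)+w(d,s_j)+w(s_j,t_j), w(d,s_j)+w(s_j,t_j)+w(t_j,d)+w(d,s_i)+w(s_i,t_i)} ≤ 3·wait. -/
/-!
Write `a = w(d,sᵢ) + w(sᵢ,tᵢ)` and `b = w(d,sⱼ) + w(sⱼ,tⱼ)`. In every feasible ordering the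
route to `tᵢ` passes through `sᵢ`, so `tᵢ` is reached no earlier than `a`, and likewise `tⱼ`
no earlier than `b`; hence `wait ≥ a + b`. Returning to the depot costs `w(tᵢ,d) ≤ a`
(resp. `w(tⱼ,d) ≤ b`), so the two tours have length at most `2a + b` and `a + 2b`, and their
minimum is at most their average `3(a + b)/2`.
-/

noncomputable def waitOpt {α : Type*} [PseudoMetricSpace α] (d si ti sj tj : α) : ℝ :=
  min (min (min ((dist d si + dist si sj + dist sj ti) +
            (dist d si + dist si sj + dist sj ti + dist ti tj))
          ((dist d si + dist si sj + dist sj tj) +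
            (dist d si + dist si sj + dist sj tj + dist tj ti)))
        (min ((dist d si + dist si ti) +
            (dist d si + dist si ti + dist ti sj + dist sj tj))
          ((dist d sj + dist sj si + dist si ti) +
            (dist d sj + dist sj si + dist si ti + dist ti tj))))
    (min ((dist d sj + dist sj si + dist si tj) +
        (dist d sj + dist sj si + dist si tj + dist tj ti))
      ((dist d sj + dist sj tj) +
        (dist d sj + dist sj tj + dist tj si + dist si ti)))

section

variable {α : Type*} [PseudoMetricSpace α] (d si ti sj tj : α)

theorem add_le_waitOpt :
    dist d si + dist si ti + (dist d sj + dist sj tj) ≤ waitOpt d si ti sj tj := by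
  refine le_min (le_min (le_min ?_ ?_) (le_min ?_ ?_)) (le_min ?_ ?_)
  · linarith [dist_triangle si sj ti, dist_triangle d si sj, dist_triangle sj ti tj]
  · linarith [dist_triangle4 si sj tj ti, dist_triangle d si sj]
  · linarith [dist_triangle4 d si ti sj]
  · linarith [dist_triangle d sj si, dist_triangle4 sj si ti tj]
  · linarith [dist_triangle d sj si, dist_triangle si tj ti, dist_triangle sj si tj]
  · linarith [dist_triangle4 d sj tj si]

theorem tour_add_tour_le :
    (dist d si + dist si ti + dist ti d + dist d sj + dist sj tj) +
        (dist d sj + dist sj tj + dist tj d + dist d si + dist si ti)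
      ≤ 3 * (dist d si + dist si ti + (dist d sj + dist sj tj)) := by
  linarith [dist_comm ti d, dist_comm tj d, dist_triangle d si ti, dist_triangle d sj tj]

end

theorem ta_one_three_approx_lat {α : Type*} [PseudoMetricSpace α]
    (d si ti sj tj : α) :
    2 * min (dist d si + dist si ti + dist ti d + dist d sj + dist sj tj)
        (dist d sj + dist sj tj + dist tj d + dist d si + dist si ti)
      ≤ 3 * waitOpt d si ti sj tj := by
  set tourI := dist d si + dist si ti + dist ti d + dist d sj + dist sj tj
  set tourJ := dist d sj + dist sj tj + dist tj d + dist d si + dist si ti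
  calc 2 * min tourI tourJ ≤ tourI + tourJ := by
        linarith [min_le_left tourI tourJ, min_le_right tourI tourJ]
    _ ≤ 3 * (dist d si + dist si ti + (dist d sj + dist sj tj)) := tour_add_tour_le d si ti sj tj
    _ ≤ 3 * waitOpt d si ti sj tj := by gcongr; exact add_le_waitOpt d si ti sj tj
end

section
/- Let a ≥ 2 and let c_1 ≤ c_2 ≤ … ≤ c_a and e_1,…,e_a be nonnegative reals with e_j ≤ c_j for all j (where c_j represents w(d,s_j)+w(s_j,t_j) and e_j represents w(d,t_j)). Then Σ_{j=1}^{a} ((a−j+1)·c_j + (a−j)·e_j) ≤ a·Σ_{j=1}^{a} c_j. -/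
/-!
Bounding each `e j` by `c j` turns the left side into `∑ (2a - 2j - 1) c_j`, which is
`a ∑ c_j` plus `∑ (a - 2j - 1) c_j`. The weights `a - 2j - 1` sum to zero and decrease while
`c` increases, so by Chebyshev's sum inequality the last sum is nonpositive.
-/

open Finset

theorem Antivary.sum_mul_nonpos_of_sum_eq_zero {ι α : Type*} [Fintype ι] [Ring α] [LinearOrder α]
    [IsStrictOrderedRing α] {f g : ι → α} (hfg : Antivary f g) (hf : ∑ i, f i = 0) :
    ∑ i, f i * g i ≤ 0 := by
  cases isEmpty_or_nonempty ι
  · simp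
  · have hcheb := hfg.card_mul_sum_le_sum_mul_sum
    rw [hf, zero_mul] at hcheb
    exact nonpos_of_mul_nonpos_right hcheb (by exact_mod_cast Fintype.card_pos)

theorem Fin.sum_sub_two_mul_val_sub_one_eq_zero (n : ℕ) :
    ∑ j : Fin n, ((n : ℝ) - 2 * (j : ℕ) - 1) = 0 := by
  induction n with
  | zero => simp
  | succ n ih =>
    have hshift : ∀ j : Fin n, (n : ℝ) + 1 - 2 * (j : ℕ) - 1 = ((n : ℝ) - 2 * (j : ℕ) - 1) + 1 :=
      fun _ => by ring
    rw [Fin.sum_univ_castSucc]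
    simp only [Fin.val_castSucc, Fin.val_last, Nat.cast_succ, hshift, sum_add_distrib, ih]
    simp only [sum_const, nsmul_eq_mul, mul_one]
    ring

theorem ta_a_lat_core_general (a : ℕ) (c e : Fin a → ℝ)
    (hec : ∀ j, e j ≤ c j)
    (hmono : Monotone c) :
    ∑ j : Fin a, (((a : ℝ) - (j : ℕ)) * c j + ((a : ℝ) - (j : ℕ) - 1) * e j)
      ≤ (a : ℝ) * ∑ j : Fin a, c j := by
  have hanti : Antivary (fun j : Fin a => (a : ℝ) - 2 * (j : ℕ) - 1) c :=
    Antitone.antivary (fun _ _ hij => by gcongr; exact hij) hmono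
  have hcentered := hanti.sum_mul_nonpos_of_sum_eq_zero (Fin.sum_sub_two_mul_val_sub_one_eq_zero a)
  calc ∑ j : Fin a, (((a : ℝ) - (j : ℕ)) * c j + ((a : ℝ) - (j : ℕ) - 1) * e j)
      ≤ ∑ j : Fin a, (((a : ℝ) - (j : ℕ)) * c j + ((a : ℝ) - (j : ℕ) - 1) * c j) := by
        gcongr with j
        · have : ((j : ℕ) : ℝ) + 1 ≤ a := by exact_mod_cast j.is_lt
          linarith
        · exact hec j
    _ = ∑ j : Fin a, ((a : ℝ) - 2 * (j : ℕ) - 1) * c j + (a : ℝ) * ∑ j : Fin a, c j := by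
        rw [mul_sum, ← sum_add_distrib]
        exact sum_congr rfl fun j _ => by ring
    _ ≤ (a : ℝ) * ∑ j : Fin a, c j := by linarith

theorem ta_a_lat_core (a : ℕ) (ha : 2 ≤ a) (c e : Fin a → ℝ)
    (hc0 : ∀ j, 0 ≤ c j) (he0 : ∀ j, 0 ≤ e j) (hec : ∀ j, e j ≤ c j)
    (hmono : Monotone c) :
    ∑ j : Fin a, (((a : ℝ) - (j : ℕ)) * c j + ((a : ℝ) - (j : ℕ) - 1) * e j)
      ≤ (a : ℝ) * ∑ j : Fin a, c j :=
  ta_a_lat_core_general a c e hec hmono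
end
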